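/- arXiv:2508.19891 — 8 statements merged into one kernel-verified Lean document; each statement's English description precedes it below -/
import Mathlib

section
/- For all natural numbers ℓ ≤ ω and all x, y ∈ {0,…,2^ω−1}, the Morton encoding decomposes self-similarly: morton_ω(x,y) = 4^{ω−ℓ} · morton_ℓ(⌊x/2^{ω−ℓ}⌋, ⌊y/2^{ω−ℓ}⌋) + morton_{ω−ℓ}(x mod 2^{ω−ℓ}, y mod 2^{ω−ℓ}). In particular, the restriction of the Z-order to each dyadic subsquare is itself (a translate of) a lower-order Z-order, which is the recursive property of Definition 2.1. -/
/-- The Morton (Z-order) encoding of a pair of `ω`-bit numbers, obtained by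
interleaving binary digits: `morton ω x y = Σ_{i<ω} (bitᵢ(x)·2^{2i+1} + bitᵢ(y)·2^{2i})`. -/
def morton (ω : ℕ) (x y : ℕ) : ℕ :=
  ∑ i ∈ Finset.range ω,
    ((Nat.testBit x i).toNat * 2 ^ (2 * i + 1) + (Nat.testBit y i).toNat * 2 ^ (2 * i))

/-- For all `ℓ ≤ ω` and all `x, y ∈ {0,…,2^ω−1}`, the Morton encoding decomposes
self-similarly:
`morton ω x y = 4^{ω−ℓ} · morton ℓ ⌊x/2^{ω−ℓ}⌋ ⌊y/2^{ω−ℓ}⌋ + morton (ω−ℓ) (x mod 2^{ω−ℓ}) (y mod 2^{ω−ℓ})`. -/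
theorem morton_self_similar (ω ℓ : ℕ) (hℓ : ℓ ≤ ω) (x y : ℕ)
    (hx : x < 2 ^ ω) (hy : y < 2 ^ ω) :
    morton ω x y =
      4 ^ (ω - ℓ) * morton ℓ (x / 2 ^ (ω - ℓ)) (y / 2 ^ (ω - ℓ)) +
        morton (ω - ℓ) (x % 2 ^ (ω - ℓ)) (y % 2 ^ (ω - ℓ)) := by
  set k := ω - ℓ with hk
  have hω : ω = k + ℓ := by omega
  rw [morton, hω, Finset.sum_range_add, add_comm]
  congr 1
  · rw [morton, Finset.mul_sum]
    refine Finset.sum_congr rfl fun i hi => ?_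
    have hdx : x / 2 ^ k / 2 ^ i = x / 2 ^ (k + i) := by
      rw [Nat.div_div_eq_div_mul, pow_add]
    have hdy : y / 2 ^ k / 2 ^ i = y / 2 ^ (k + i) := by
      rw [Nat.div_div_eq_div_mul, pow_add]
    have hbx : (x / 2 ^ k).testBit i = x.testBit (k + i) := by
      simp [Nat.testBit, Nat.shiftRight_eq_div_pow, hdx]
    have hby : (y / 2 ^ k).testBit i = y.testBit (k + i) := by
      simp [Nat.testBit, Nat.shiftRight_eq_div_pow, hdy]
    rw [hbx, hby]
    have : (4:ℕ) ^ k = 2 ^ (2 * k) := by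
      rw [pow_mul]; norm_num
    rw [this]
    rw [show 2 * (k + i) + 1 = (2*i+1) + 2*k by ring, show 2 * (k + i) = 2*i + 2*k by ring,
      pow_add, pow_add]
    ring
  · refine Finset.sum_congr rfl fun i hi => ?_
    have hi' : i < k := Finset.mem_range.mp hi
    simp [Nat.testBit_mod_two_pow, hi']
end

section
/- Let ω ∈ ℕ, let C be a level-k dyadic cell of the grid {0,…,2^ω−1}² with corner (a,b), and let p ∈ C be any grid point of C. Then morton_ω(a,b) ≤ morton_ω(p) ≤ morton_ω(a,b) + 4^k − 1. (This is the paper's Observation: π(C)∘0̄ ≤ π(q) ≤ π(C)∘1̄, with bit strings read as binary integers.) -/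
def mortonDigit (x y i : ℕ) : ℕ :=
  (x.testBit i).toNat * 2 ^ (2 * i + 1) + (y.testBit i).toNat * 2 ^ (2 * i)

lemma mortonDigit_le (x y i : ℕ) : mortonDigit x y i ≤ 3 * 4 ^ i := by
  have hx := Bool.toNat_le (x.testBit i)
  have hy := Bool.toNat_le (y.testBit i)
  calc mortonDigit x y i ≤ 1 * 2 ^ (2 * i + 1) + 1 * 2 ^ (2 * i) := by
        unfold mortonDigit; gcongr
    _ = 3 * 4 ^ i := by rw [pow_succ, pow_mul]; norm_num; ring

lemma morton_lt_four_pow (k x y : ℕ) : morton k x y < 4 ^ k := by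
  induction k with
  | zero => simp [morton]
  | succ k ih =>
    have hstep : morton (k + 1) x y = morton k x y + mortonDigit x y k :=
      Finset.sum_range_succ _ _
    have := mortonDigit_le x y k
    rw [hstep, pow_succ]
    omega

lemma morton_eq_zero_of_two_pow_dvd {k x y : ℕ} (hx : 2 ^ k ∣ x) (hy : 2 ^ k ∣ y) :
    morton k x y = 0 := by
  obtain ⟨m, rfl⟩ := hx
  obtain ⟨n, rfl⟩ := hy
  refine Finset.sum_eq_zero fun i hi => ?_
  simp [Nat.testBit_two_pow_mul, Finset.mem_range.mp hi]

lemma mortonDigit_add (k i x y : ℕ) :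
    mortonDigit x y (k + i) = 4 ^ k * mortonDigit (x / 2 ^ k) (y / 2 ^ k) i := by
  simp only [mortonDigit, Nat.testBit_div_two_pow, add_comm i k, pow_add, pow_mul]
  ring

lemma morton_add (k n x y : ℕ) :
    morton (k + n) x y = morton k x y + 4 ^ k * morton n (x / 2 ^ k) (y / 2 ^ k) := by
  simp only [morton, Finset.mul_sum]
  rw [Finset.sum_range_add]
  exact congrArg _ (Finset.sum_congr rfl fun i _ => mortonDigit_add k i x y)

lemma Nat.div_two_pow_eq_of_le_of_lt_add {k a q : ℕ} (hd : 2 ^ k ∣ a) (h₁ : a ≤ q)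
    (h₂ : q < a + 2 ^ k) : q / 2 ^ k = a / 2 ^ k := by
  obtain ⟨m, rfl⟩ := hd
  rw [Nat.mul_div_cancel_left m (Nat.two_pow_pos k)]
  exact Nat.div_eq_of_lt_le (by linarith) (by linarith)

theorem morton_cell_bounds_general (ω k a b : ℕ) (hk : k ≤ ω)
    (hda : 2 ^ k ∣ a) (hdb : 2 ^ k ∣ b)
    (p : ℕ × ℕ)
    (hp1 : a ≤ p.1 ∧ p.1 ≤ a + 2 ^ k - 1) (hp2 : b ≤ p.2 ∧ p.2 ≤ b + 2 ^ k - 1) :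
    morton ω a b ≤ morton ω p.1 p.2 ∧
      morton ω p.1 p.2 ≤ morton ω a b + 4 ^ k - 1 := by
  obtain ⟨n, rfl⟩ := Nat.exists_eq_add_of_le hk
  have hpos := Nat.two_pow_pos k
  have hx : p.1 / 2 ^ k = a / 2 ^ k := Nat.div_two_pow_eq_of_le_of_lt_add hda hp1.1 (by omega)
  have hy : p.2 / 2 ^ k = b / 2 ^ k := Nat.div_two_pow_eq_of_le_of_lt_add hdb hp2.1 (by omega)
  have hlow := morton_lt_four_pow k p.1 p.2
  rw [morton_add, morton_add, hx, hy, morton_eq_zero_of_two_pow_dvd hda hdb]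
  omega

/-- Let `C` be a level-`k` dyadic cell of the grid `{0,…,2^ω−1}²` with corner `(a,b)`
(i.e. `k ≤ ω`, `a, b < 2^ω` are divisible by `2^k`, and
`C = {a,…,a+2^k−1} × {b,…,b+2^k−1}`), and let `p ∈ C` be a grid point of `C`. Then
`morton ω a b ≤ morton ω p ≤ morton ω a b + 4^k − 1`. -/
theorem morton_cell_bounds (ω k a b : ℕ) (hk : k ≤ ω)
    (ha : a < 2 ^ ω) (hb : b < 2 ^ ω) (hda : 2 ^ k ∣ a) (hdb : 2 ^ k ∣ b)
    (p : ℕ × ℕ)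
    (hp1 : a ≤ p.1 ∧ p.1 ≤ a + 2 ^ k - 1) (hp2 : b ≤ p.2 ∧ p.2 ≤ b + 2 ^ k - 1) :
    morton ω a b ≤ morton ω p.1 p.2 ∧
      morton ω p.1 p.2 ≤ morton ω a b + 4 ^ k - 1 :=
  morton_cell_bounds_general ω k a b hk hda hdb p hp1 hp2
end

section
/- Let ω ∈ ℕ and let C be a level-k dyadic cell of the grid {0,…,2^ω−1}² with corner (a,b). Then for every grid point p ∈ {0,…,2^ω−1}², p ∈ C if and only if morton_ω(a,b) ≤ morton_ω(p) < morton_ω(a,b) + 4^k. In other words, the set of Morton codes of the points of any dyadic cell is exactly a contiguous interval of 4^k consecutive integers. -/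
lemma Nat.le_and_lt_add_iff_div_eq {d a x : ℕ} (hd : 0 < d) (ha : d ∣ a) :
    a ≤ x ∧ x < a + d ↔ x / d = a / d := by
  obtain ⟨q, rfl⟩ := ha
  rw [Nat.mul_div_cancel_left q hd, Nat.div_eq_iff hd, mul_comm q d]
  omega

namespace morton

@[simp]
lemma zero_left (x y : ℕ) : morton 0 x y = 0 := rfl

@[simp]
lemma zero_zero (n : ℕ) : morton n 0 0 = 0 := by simp [morton]

lemma succ (n x y : ℕ) :
    morton (n + 1) x y = 2 * (x % 2) + y % 2 + 4 * morton n (x / 2) (y / 2) := by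
  rw [morton, Finset.sum_range_succ', add_comm, morton, Finset.mul_sum]
  congr 1
  · rw [Nat.testBit_zero, Nat.testBit_zero]
    rcases Nat.mod_two_eq_zero_or_one x with hx | hx <;>
      rcases Nat.mod_two_eq_zero_or_one y with hy | hy <;> simp [hx, hy]
  · refine Finset.sum_congr rfl fun i _ => ?_
    rw [Nat.testBit_succ, Nat.testBit_succ]
    ring

lemma lt_four_pow (n x y : ℕ) : morton n x y < 4 ^ n := by
  induction n generalizing x y with
  | zero => simp
  | succ n ih =>
    have := ih (x / 2) (y / 2)
    rw [succ, pow_succ]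
    omega

lemma inj {n x y x' y' : ℕ} (hx : x < 2 ^ n) (hy : y < 2 ^ n) (hx' : x' < 2 ^ n)
    (hy' : y' < 2 ^ n) (h : morton n x y = morton n x' y') : x = x' ∧ y = y' := by
  induction n generalizing x y x' y' with
  | zero => simp_all
  | succ n ih =>
    rw [succ, succ] at h
    rw [pow_succ] at hx hy hx' hy'
    have hx2 := Nat.mod_lt x two_pos
    have hy2 := Nat.mod_lt y two_pos
    have hx2' := Nat.mod_lt x' two_pos
    have hy2' := Nat.mod_lt y' two_pos
    have high : morton n (x / 2) (y / 2) = morton n (x' / 2) (y' / 2) := by omega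
    obtain ⟨hxq, hyq⟩ := ih (by omega) (by omega) (by omega) (by omega) high
    omega

lemma add (k n x y : ℕ) :
    morton (k + n) x y =
      morton k (x % 2 ^ k) (y % 2 ^ k) + 4 ^ k * morton n (x / 2 ^ k) (y / 2 ^ k) := by
  induction k generalizing x y with
  | zero => simp
  | succ k ih =>
    have mod_mod (z : ℕ) : z % 2 ^ (k + 1) % 2 = z % 2 :=
      Nat.mod_mod_of_dvd z (dvd_pow_self 2 k.succ_ne_zero)
    have mod_div (z : ℕ) : z % 2 ^ (k + 1) / 2 = z / 2 % 2 ^ k := by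
      rw [pow_succ, mul_comm, Nat.mod_mul_right_div_self]
    have div_div (z : ℕ) : z / 2 ^ (k + 1) = z / 2 / 2 ^ k := by
      rw [Nat.div_div_eq_div_mul, pow_succ, mul_comm]
    rw [Nat.add_right_comm, succ, succ, ih, mod_mod, mod_mod, mod_div, mod_div, div_div, div_div]
    ring

lemma add_div_four_pow (k n x y : ℕ) :
    morton (k + n) x y / 4 ^ k = morton n (x / 2 ^ k) (y / 2 ^ k) := by
  rw [add, Nat.add_mul_div_left _ _ (by positivity), Nat.div_eq_of_lt (lt_four_pow _ _ _),
    zero_add]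

lemma four_pow_dvd_add {k n x y : ℕ} (hx : 2 ^ k ∣ x) (hy : 2 ^ k ∣ y) :
    4 ^ k ∣ morton (k + n) x y := by
  rw [add, Nat.mod_eq_zero_of_dvd hx, Nat.mod_eq_zero_of_dvd hy, zero_zero, zero_add]
  exact Dvd.intro _ rfl

end morton

/-- Let `C` be a level-`k` dyadic cell of the grid `{0,…,2^ω−1}²` with corner `(a,b)`.
Then for every grid point `p` of the grid, `p ∈ C` if and only if
`morton ω a b ≤ morton ω p < morton ω a b + 4^k`: the Morton codes of the points of
any dyadic cell form a contiguous interval of `4^k` consecutive integers. -/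
theorem morton_cell_iff (ω k a b : ℕ) (hk : k ≤ ω)
    (ha : a < 2 ^ ω) (hb : b < 2 ^ ω) (hda : 2 ^ k ∣ a) (hdb : 2 ^ k ∣ b)
    (p : ℕ × ℕ) (hp1 : p.1 < 2 ^ ω) (hp2 : p.2 < 2 ^ ω) :
    (a ≤ p.1 ∧ p.1 < a + 2 ^ k ∧ b ≤ p.2 ∧ p.2 < b + 2 ^ k) ↔
      (morton ω a b ≤ morton ω p.1 p.2 ∧
        morton ω p.1 p.2 < morton ω a b + 4 ^ k) := by
  obtain ⟨n, rfl⟩ := Nat.exists_eq_add_of_le hk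
  have div_lt {z : ℕ} (hz : z < 2 ^ (k + n)) : z / 2 ^ k < 2 ^ n :=
    Nat.div_lt_of_lt_mul (by rwa [← pow_add])
  rw [Nat.le_and_lt_add_iff_div_eq (by positivity) (morton.four_pow_dvd_add hda hdb),
    morton.add_div_four_pow, morton.add_div_four_pow, ← and_assoc,
    Nat.le_and_lt_add_iff_div_eq (by positivity) hda,
    Nat.le_and_lt_add_iff_div_eq (by positivity) hdb]
  exact ⟨fun ⟨h1, h2⟩ => by rw [h1, h2],
    morton.inj (div_lt hp1) (div_lt hp2) (div_lt ha) (div_lt hb)⟩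
end

section
/- Let ω ∈ ℕ, 0 ≤ k ≤ ω, and let p, p' be points of the grid {0,…,2^ω−1}². Then p and p' lie in the same level-k dyadic cell if and only if ⌊morton_ω(p)/4^k⌋ = ⌊morton_ω(p')/4^k⌋, i.e. if and only if their Morton codes agree on the 2(ω−k) most significant bits. -/
theorem morton_succ (m x y : ℕ) :
    morton (m + 1) x y = 2 * (x % 2) + y % 2 + 4 * morton m (x / 2) (y / 2) := by
  rw [morton, Finset.sum_range_succ', morton, Finset.mul_sum, add_comm]
  congr 1
  · simp only [Nat.toNat_testBit, pow_zero, Nat.div_one]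
    ring
  · refine Finset.sum_congr rfl fun i _ => ?_
    rw [Nat.testBit_div_two, Nat.testBit_div_two]
    ring

theorem morton_div_four (m x y : ℕ) : morton m x y / 4 = morton (m - 1) (x / 2) (y / 2) := by
  cases m with
  | zero => simp [morton]
  | succ m =>
    rw [morton_succ, Nat.add_sub_cancel]
    omega

theorem morton_div_four_pow (m k x y : ℕ) :
    morton m x y / 4 ^ k = morton (m - k) (x / 2 ^ k) (y / 2 ^ k) := by
  induction k with
  | zero => simp
  | succ k ih =>
    rw [pow_succ, ← Nat.div_div_eq_div_mul, ih, morton_div_four, Nat.sub_sub,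
      Nat.div_div_eq_div_mul, Nat.div_div_eq_div_mul, ← pow_succ]

theorem morton_eq_morton_iff {m x y x' y' : ℕ} (hx : x < 2 ^ m) (hy : y < 2 ^ m)
    (hx' : x' < 2 ^ m) (hy' : y' < 2 ^ m) :
    morton m x y = morton m x' y' ↔ x = x' ∧ y = y' := by
  refine ⟨fun h => ?_, fun ⟨rfl, rfl⟩ => rfl⟩
  induction m generalizing x y x' y' with
  | zero => simp_all
  | succ m ih =>
    rw [pow_succ] at hx hy hx' hy'
    rw [morton_succ, morton_succ] at h
    have ⟨hx2, hy2⟩ := ih (x := x / 2) (y := y / 2) (x' := x' / 2) (y' := y' / 2)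
      (by omega) (by omega) (by omega) (by omega) (by omega)
    omega

theorem Nat.div_two_pow_lt_two_pow_sub {n m k : ℕ} (hn : n < 2 ^ m) :
    n / 2 ^ k < 2 ^ (m - k) := by
  rw [Nat.div_lt_iff_lt_mul (by positivity), ← pow_add]
  exact hn.trans_le (Nat.pow_le_pow_right two_pos (by omega))

theorem Nat.div_eq_div_of_dvd_of_le_of_lt {d a n : ℕ} (hda : d ∣ a) (h₁ : a ≤ n)
    (h₂ : n < a + d) : n / d = a / d := by
  obtain ⟨q, rfl⟩ := hda
  have hd : 0 < d := by rcases d with _ | d <;> simp_all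
  rw [Nat.mul_div_cancel_left q hd]
  exact Nat.div_eq_of_lt_le (by linarith) (by linarith)

theorem Nat.mul_div_le_and_lt_add (n : ℕ) {d : ℕ} (hd : 0 < d) :
    d * (n / d) ≤ n ∧ n < d * (n / d) + d :=
  ⟨Nat.mul_div_le n d, by simpa [mul_add_one] using Nat.lt_mul_div_succ n hd⟩

theorem morton_same_cell_iff_general (ω k : ℕ) (p p' : ℕ × ℕ)
    (hp1 : p.1 < 2 ^ ω) (hp2 : p.2 < 2 ^ ω)
    (hp1' : p'.1 < 2 ^ ω) (hp2' : p'.2 < 2 ^ ω) :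
    (∃ a b : ℕ, a < 2 ^ ω ∧ b < 2 ^ ω ∧ 2 ^ k ∣ a ∧ 2 ^ k ∣ b ∧
        (a ≤ p.1 ∧ p.1 < a + 2 ^ k ∧ b ≤ p.2 ∧ p.2 < b + 2 ^ k) ∧
        (a ≤ p'.1 ∧ p'.1 < a + 2 ^ k ∧ b ≤ p'.2 ∧ p'.2 < b + 2 ^ k)) ↔
      morton ω p.1 p.2 / 4 ^ k = morton ω p'.1 p'.2 / 4 ^ k := by
  rw [morton_div_four_pow, morton_div_four_pow,
    morton_eq_morton_iff (Nat.div_two_pow_lt_two_pow_sub hp1) (Nat.div_two_pow_lt_two_pow_sub hp2)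
      (Nat.div_two_pow_lt_two_pow_sub hp1') (Nat.div_two_pow_lt_two_pow_sub hp2')]
  constructor
  · rintro ⟨a, b, -, -, hda, hdb, ⟨h₁, h₂, h₃, h₄⟩, h₁', h₂', h₃', h₄'⟩
    rw [Nat.div_eq_div_of_dvd_of_le_of_lt hda h₁ h₂, Nat.div_eq_div_of_dvd_of_le_of_lt hda h₁' h₂',
      Nat.div_eq_div_of_dvd_of_le_of_lt hdb h₃ h₄,
      Nat.div_eq_div_of_dvd_of_le_of_lt hdb h₃' h₄']
    exact ⟨rfl, rfl⟩
  · rintro ⟨hx, hy⟩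
    have hd : 0 < 2 ^ k := by positivity
    obtain ⟨h₁, h₂⟩ := Nat.mul_div_le_and_lt_add p.1 hd
    obtain ⟨h₃, h₄⟩ := Nat.mul_div_le_and_lt_add p.2 hd
    obtain ⟨h₁', h₂'⟩ := Nat.mul_div_le_and_lt_add p'.1 hd
    obtain ⟨h₃', h₄'⟩ := Nat.mul_div_le_and_lt_add p'.2 hd
    rw [← hx] at h₁' h₂'
    rw [← hy] at h₃' h₄'
    exact ⟨_, _, h₁.trans_lt hp1, h₃.trans_lt hp2, dvd_mul_right _ _, dvd_mul_right _ _,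
      ⟨h₁, h₂, h₃, h₄⟩, h₁', h₂', h₃', h₄'⟩

/-- Two grid points `p, p'` of `{0,…,2^ω−1}²` lie in the same level-`k` dyadic cell
(for `k ≤ ω`) if and only if `⌊morton ω p / 4^k⌋ = ⌊morton ω p' / 4^k⌋`, i.e. iff
their Morton codes agree on the `2(ω−k)` most significant bits. -/
theorem morton_same_cell_iff (ω k : ℕ) (hk : k ≤ ω) (p p' : ℕ × ℕ)
    (hp1 : p.1 < 2 ^ ω) (hp2 : p.2 < 2 ^ ω)
    (hp1' : p'.1 < 2 ^ ω) (hp2' : p'.2 < 2 ^ ω) :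
    (∃ a b : ℕ, a < 2 ^ ω ∧ b < 2 ^ ω ∧ 2 ^ k ∣ a ∧ 2 ^ k ∣ b ∧
        (a ≤ p.1 ∧ p.1 < a + 2 ^ k ∧ b ≤ p.2 ∧ p.2 < b + 2 ^ k) ∧
        (a ≤ p'.1 ∧ p'.1 < a + 2 ^ k ∧ b ≤ p'.2 ∧ p'.2 < b + 2 ^ k)) ↔
      morton ω p.1 p.2 / 4 ^ k = morton ω p'.1 p'.2 / 4 ^ k :=
  morton_same_cell_iff_general ω k p p' hp1 hp2 hp1' hp2'
end

section
/- For every recursive space-filling curve ordering σ of the grid D = {0,…,2^ω−1}² in the sense of Definition 2.1, there exists a recursive space-filling curve map π on D in the sense of Definition 2.3 such that for all i < j one has π(σ(i)) < π(σ(j)) in lexicographic order; i.e. sorting D by π recovers σ. Moreover this π is unique. -/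
/-!
Every level-`k` dyadic cell is the `σ`-image of an aligned block `[n 4^k, (n+1) 4^k)` of
indices: by induction along the recursive definition, once one sees that four disjoint squares
tiling `D` must be its four corner quadrants. So the first `ℓ` base-4 digits of the position of a
point along `σ` only depend on its depth-`ℓ` cell and separate different cells; these digits, as
`2ℓ` bits, are `π`. Conversely, if `π'` sorts `σ`, the strings `π'(σ 0) < … < π'(σ (4^ω - 1))`
exhaust the `4^ω` bit strings of length `2ω`, so `π'(σ i)` is the binary expansion of `i`, and the
prefix condition determines `π'` on the coarser cells.
-/

/-- The axis-aligned square of grid points with corner `c` and side length `s`. -/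
def square (c : ℕ × ℕ) (s : ℕ) : Set (ℕ × ℕ) :=
  {p | c.1 ≤ p.1 ∧ p.1 < c.1 + s ∧ c.2 ≤ p.2 ∧ p.2 < c.2 + s}

/-- The grid `D = {0,…,2^ω−1}²`. -/
def grid (ω : ℕ) : Set (ℕ × ℕ) := square (0, 0) (2 ^ ω)

/-- A recursive space-filling curve ordering (Definition 2.1) of the grid
`D = {0,…,2^ω−1}²` with `m = 4^ω` points: a bijection `σ : {0,…,m−1} → D` such
that, if `ω ≥ 1`, there exist four pairwise disjoint equal-sized axis-aligned
subsquares `S₁, S₂, S₃, S₄` partitioning `D` with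
`σ({j·m/4,…,(j+1)·m/4−1}) = S_{j+1} ∩ D` for `j = 0,1,2,3`, and the restriction of
`σ` to each `S_j`, reindexed and translated back to the origin, is itself a
recursive space-filling curve ordering. -/
def IsRSFCOrdering : ℕ → (ℕ → ℕ × ℕ) → Prop
  | 0, σ => Set.BijOn σ (Set.Iio (4 ^ 0)) (grid 0)
  | ω + 1, σ =>
      Set.BijOn σ (Set.Iio (4 ^ (ω + 1))) (grid (ω + 1)) ∧
      ∃ (c : Fin 4 → ℕ × ℕ) (s : ℕ),
        (∀ j j' : Fin 4, j ≠ j' → Disjoint (square (c j) s) (square (c j') s)) ∧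
        (⋃ j, square (c j) s) = grid (ω + 1) ∧
        (∀ j : Fin 4,
          σ '' Set.Ico (j.1 * 4 ^ ω) ((j.1 + 1) * 4 ^ ω) =
            square (c j) s ∩ grid (ω + 1)) ∧
        (∀ j : Fin 4, IsRSFCOrdering ω fun i =>
          ((σ (j.1 * 4 ^ ω + i)).1 - (c j).1, (σ (j.1 * 4 ^ ω + i)).2 - (c j).2))

/-- `(a, b)` is the corner of a level-`k` dyadic cell of the grid `{0,…,2^ω−1}²`,
i.e. `a, b < 2^ω` are divisible by `2^k`. -/
def CellCorner (ω k a b : ℕ) : Prop :=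
  a < 2 ^ ω ∧ b < 2 ^ ω ∧ 2 ^ k ∣ a ∧ 2 ^ k ∣ b

/-- The level-`k` dyadic cell `{a,…,a+2^k−1} × {b,…,b+2^k−1}` as a set of points. -/
def dyadicCell (k a b : ℕ) : Set (ℕ × ℕ) :=
  {p | a ≤ p.1 ∧ p.1 < a + 2 ^ k ∧ b ≤ p.2 ∧ p.2 < b + 2 ^ k}

/-- A recursive space-filling curve map (Definition 2.3, `d = 2`) on the grid
`{0,…,2^ω−1}²`: `π ℓ (a, b)` is the bit string assigned to the depth-`ℓ` quadtree
cube (i.e. the level-`(ω−ℓ)` dyadic cell) with corner `(a, b)`; it must have length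
`2ℓ`, distinct cubes of the same depth must receive distinct strings, and the string
of a cube must be a prefix of the string of each of its sub-cubes. -/
def IsRSFCMap (ω : ℕ) (π : ℕ → ℕ × ℕ → List Bool) : Prop :=
  (∀ ℓ, ℓ ≤ ω → ∀ a b, CellCorner ω (ω - ℓ) a b → (π ℓ (a, b)).length = 2 * ℓ) ∧
  (∀ ℓ, ℓ ≤ ω → ∀ a b a' b',
    CellCorner ω (ω - ℓ) a b → CellCorner ω (ω - ℓ) a' b' →
    (a, b) ≠ (a', b') → π ℓ (a, b) ≠ π ℓ (a', b')) ∧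
  (∀ ℓ ℓ', ℓ ≤ ℓ' → ℓ' ≤ ω → ∀ a b a' b',
    CellCorner ω (ω - ℓ) a b → CellCorner ω (ω - ℓ') a' b' →
    dyadicCell (ω - ℓ') a' b' ⊆ dyadicCell (ω - ℓ) a b →
    π ℓ (a, b) <+: π ℓ' (a', b'))

/-- For a grid point `p`, `π(p)` is the string of the unit cell containing `p`,
whose corner is `p` itself, i.e. `π ω p`.  `SortsTo ω π σ` says that sorting the
points of the grid by the lexicographic order of their strings `π(p)` recovers the
ordering `σ`. -/
def SortsTo (ω : ℕ) (π : ℕ → ℕ × ℕ → List Bool) (σ : ℕ → ℕ × ℕ) : Prop :=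
  ∀ i j : ℕ, i < j → j < 4 ^ ω → List.Lex (· < ·) (π ω (σ i)) (π ω (σ j))


/-- `L` binary digits, most significant first, so that the lexicographic order on strings is the
order on `ℕ`. -/
def toBits : ℕ → ℕ → List Bool
  | 0, _ => []
  | L + 1, n => decide (2 ^ L ≤ n) :: toBits L (n % 2 ^ L)

@[simp]
theorem length_toBits (L n : ℕ) : (toBits L n).length = L := by
  induction L generalizing n <;> simp [toBits, *]

theorem toBits_strictMonoOn : ∀ L, StrictMonoOn (toBits L) (Set.Iio (2 ^ L))
  | 0 => fun n hn m hm hnm => by simp_all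
  | L + 1 => by
    intro n hn m hm hnm
    simp only [Set.mem_Iio, pow_succ] at hn hm
    have ih : n % 2 ^ L < m % 2 ^ L → toBits L (n % 2 ^ L) < toBits L (m % 2 ^ L) :=
      toBits_strictMonoOn L (Nat.mod_lt _ (by positivity)) (Nat.mod_lt _ (by positivity))
    simp only [toBits, List.cons_lt_cons_iff]
    by_cases hn' : 2 ^ L ≤ n
    · have hm' : 2 ^ L ≤ m := hn'.trans hnm.le
      refine .inr ⟨by simp [hn', hm'], ih ?_⟩
      rw [Nat.mod_eq_sub_mod hn', Nat.mod_eq_sub_mod hm', Nat.mod_eq_of_lt (by omega),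
        Nat.mod_eq_of_lt (by omega)]
      omega
    · by_cases hm' : 2 ^ L ≤ m
      · exact .inl (by simp [hn', hm'])
      · exact .inr ⟨by simp [hn', hm'], ih (by rwa [Nat.mod_eq_of_lt (not_le.mp hn'),
          Nat.mod_eq_of_lt (not_le.mp hm')])⟩

theorem take_toBits (L δ n : ℕ) : (toBits (L + δ) n).take L = toBits L (n / 2 ^ δ) := by
  induction L generalizing n with
  | zero => rfl
  | succ L ih =>
    rw [Nat.add_right_comm, toBits, toBits, List.take_succ_cons, ih, pow_add, mul_comm,
      Nat.mod_mul_right_div_self]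
    simp [Nat.le_div_iff_mul_le, mul_comm]

theorem take_toBits_eq_take_toBits_iff {L δ n m : ℕ} (hn : n < 2 ^ (L + δ))
    (hm : m < 2 ^ (L + δ)) :
    (toBits (L + δ) n).take L = (toBits (L + δ) m).take L ↔ n / 2 ^ δ = m / 2 ^ δ := by
  have hlt : ∀ {k}, k < 2 ^ (L + δ) → k / 2 ^ δ ∈ Set.Iio (2 ^ L) := fun hk =>
    Nat.div_lt_of_lt_mul (by rwa [← pow_add, add_comm])
  rw [take_toBits, take_toBits]
  exact (toBits_strictMonoOn L).injOn.eq_iff (hlt hn) (hlt hm)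

def bitStrings (L : ℕ) : Finset (List Bool) :=
  (Finset.univ : Finset (List.Vector Bool L)).map ⟨List.Vector.toList, List.Vector.toList_injective⟩

theorem mem_bitStrings {L : ℕ} {l : List Bool} : l ∈ bitStrings L ↔ l.length = L := by
  simp only [bitStrings, Finset.mem_map, Finset.mem_univ, true_and, Function.Embedding.coeFn_mk]
  exact ⟨fun ⟨v, hv⟩ => hv ▸ v.toList_length, fun hl => ⟨⟨l, hl⟩, rfl⟩⟩

theorem card_bitStrings (L : ℕ) : (bitStrings L).card = 2 ^ L := by
  simp [bitStrings, card_vector]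

theorem eq_toBits_of_strictMonoOn {L : ℕ} {f : ℕ → List Bool}
    (hlen : ∀ i < 2 ^ L, (f i).length = L) (hf : StrictMonoOn f (Set.Iio (2 ^ L))) :
    ∀ i < 2 ^ L, f i = toBits L i := by
  have hunique : ∀ g : ℕ → List Bool, (∀ i < 2 ^ L, (g i).length = L) →
      StrictMonoOn g (Set.Iio (2 ^ L)) →
      (fun i : Fin (2 ^ L) => g i) = (bitStrings L).orderEmbOfFin (card_bitStrings L) :=
    fun g hlen hg => Finset.orderEmbOfFin_unique _ (fun i => mem_bitStrings.mpr (hlen i i.2))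
      (fun i j hij => hg i.2 j.2 hij)
  intro i hi
  exact congrFun ((hunique f hlen hf).trans (hunique (toBits L) (fun _ _ => length_toBits ..)
    (toBits_strictMonoOn L)).symm) ⟨i, hi⟩

theorem square_eq_prod (c : ℕ × ℕ) (s : ℕ) :
    square c s = Set.Ico c.1 (c.1 + s) ×ˢ Set.Ico c.2 (c.2 + s) := by
  ext p
  simp [square, and_assoc]

theorem ncard_square (c : ℕ × ℕ) (s : ℕ) : (square c s).ncard = s * s := by
  simp [square_eq_prod, Set.ncard_prod]

theorem preimage_swap_square (c : ℕ × ℕ) (s : ℕ) :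
    Prod.swap ⁻¹' square c s = square c.swap s := by
  ext p
  simp only [square, Set.mem_preimage, Set.mem_ofPred_eq, Prod.fst_swap, Prod.snd_swap]
  tauto

theorem fst_eq_zero_or_eq_of_tiling {ι : Type*} {c : ι → ℕ × ℕ} {s : ℕ} (hs : 0 < s)
    (hdisj : Pairwise fun i j => Disjoint (square (c i) s) (square (c j) s))
    (hcover : ⋃ i, square (c i) s = square (0, 0) (2 * s)) (i : ι) :
    (c i).1 = 0 ∨ (c i).1 = s := by
  have hsub : ∀ {p}, p ∈ square (c i) s → p ∈ square (0, 0) (2 * s) := fun hp =>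
    hcover ▸ Set.mem_iUnion.mpr ⟨i, hp⟩
  have hci : c i ∈ square (c i) s := by simp [square, hs]
  have hfar : ((c i).1 + s - 1, (c i).2) ∈ square (0, 0) (2 * s) := hsub (by simp [square]; omega)
  simp only [square, Set.mem_ofPred_eq] at hfar
  rcases Nat.eq_zero_or_pos (c i).1 with h0 | hpos
  · exact .inl h0
  -- the point just left of the corner `c i` lies in another tile, which ends before `c i`
  have hleft : ((c i).1 - 1, (c i).2) ∈ square (0, 0) (2 * s) := by
    simp [square]; omega
  obtain ⟨j, hj⟩ := Set.mem_iUnion.mp (hcover ▸ hleft)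
  simp only [square, Set.mem_ofPred_eq] at hj
  have hij : i ≠ j := by rintro rfl; omega
  have hcj : c i ∉ square (c j) s := Set.disjoint_left.mp (hdisj hij) hci
  simp only [square, Set.mem_ofPred_eq] at hcj
  omega

theorem snd_eq_zero_or_eq_of_tiling {ι : Type*} {c : ι → ℕ × ℕ} {s : ℕ} (hs : 0 < s)
    (hdisj : Pairwise fun i j => Disjoint (square (c i) s) (square (c j) s))
    (hcover : ⋃ i, square (c i) s = square (0, 0) (2 * s)) (i : ι) :
    (c i).2 = 0 ∨ (c i).2 = s := by
  refine fst_eq_zero_or_eq_of_tiling (c := fun i => (c i).swap) hs (fun i j hij => ?_) ?_ i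
  · simpa only [← preimage_swap_square] using (hdisj hij).preimage Prod.swap
  · simp only [← preimage_swap_square, ← Set.preimage_iUnion, hcover]
    exact preimage_swap_square _ _

theorem IsRSFCOrdering.bijOn {ω : ℕ} {σ : ℕ → ℕ × ℕ} (hσ : IsRSFCOrdering ω σ) :
    Set.BijOn σ (Set.Iio (4 ^ ω)) (grid ω) := by
  cases ω with
  | zero => exact hσ
  | succ ω => exact hσ.1

theorem IsRSFCOrdering.exists_quadrant {ω : ℕ} {σ : ℕ → ℕ × ℕ} (hσ : IsRSFCOrdering (ω + 1) σ)
    {p : ℕ × ℕ} (hp : p ∈ grid (ω + 1)) :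
    ∃ j < 4, ∃ c : ℕ × ℕ, 2 ^ ω ∣ c.1 ∧ 2 ^ ω ∣ c.2 ∧ p ∈ square c (2 ^ ω) ∧
      σ '' Set.Ico (j * 4 ^ ω) ((j + 1) * 4 ^ ω) = square c (2 ^ ω) ∧
      IsRSFCOrdering ω fun i => ((σ (j * 4 ^ ω + i)).1 - c.1, (σ (j * 4 ^ ω + i)).2 - c.2) := by
  obtain ⟨hbij, c, s, hdisj, hcover, himg, hrec⟩ := hσ
  have himg' : ∀ j, σ '' Set.Ico (j.1 * 4 ^ ω) ((j.1 + 1) * 4 ^ ω) = square (c j) s := fun j => by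
    rw [himg, Set.inter_eq_left, ← hcover]
    exact Set.subset_iUnion (fun j => square (c j) s) j
  have hs : s = 2 ^ ω := by
    have hinj : Set.InjOn σ (Set.Ico 0 (4 ^ ω)) :=
      hbij.injOn.mono fun i hi => by simp_all [pow_succ]; omega
    have hcard := congrArg Set.ncard (himg' 0)
    simp only [Fin.val_zero, zero_mul, zero_add, one_mul] at hcard
    rw [hinj.ncard_image, Set.ncard_Ico_nat, ncard_square, Nat.sub_zero,
      show 4 ^ ω = 2 ^ ω * 2 ^ ω by rw [← mul_pow]; norm_num] at hcard
    exact Nat.mul_self_inj.mp hcard.symm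
  subst hs
  have hcover' : ⋃ j, square (c j) (2 ^ ω) = square (0, 0) (2 * 2 ^ ω) := by
    rw [hcover, grid, pow_succ']
  have hdvd : ∀ x, x = 0 ∨ x = 2 ^ ω → 2 ^ ω ∣ x := by rintro x (rfl | rfl) <;> simp
  obtain ⟨j, hj⟩ := Set.mem_iUnion.mp (hcover ▸ hp)
  exact ⟨j, j.2, c j, hdvd _ (fst_eq_zero_or_eq_of_tiling (by positivity) hdisj hcover' j),
    hdvd _ (snd_eq_zero_or_eq_of_tiling (by positivity) hdisj hcover' j), hj, himg' j, hrec j⟩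

theorem image_Ico_eq_dyadicCell_of_shift {σ : ℕ → ℕ × ℕ} {m x y k a b : ℕ} {c : ℕ × ℕ}
    (hσc : σ '' Set.Ico (m + x) (m + y) ⊆ Set.Ici c) (hca : c ≤ (a, b))
    (h : (fun i => ((σ (m + i)).1 - c.1, (σ (m + i)).2 - c.2)) '' Set.Ico x y =
      dyadicCell k (a - c.1) (b - c.2)) :
    σ '' Set.Ico (m + x) (m + y) = dyadicCell k a b := by
  set shift : ℕ × ℕ → ℕ × ℕ := fun p => (p.1 - c.1, p.2 - c.2)
  rw [Prod.le_def] at hca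
  have hinj : Set.InjOn shift (Set.Ici c) := fun p hp q hq hpq => by
    simp only [Set.mem_Ici, Prod.le_def, Prod.ext_iff, shift] at hp hq hpq ⊢
    omega
  have hcell : dyadicCell k a b ⊆ Set.Ici c := fun p hp => by
    simp only [dyadicCell, Set.mem_ofPred_eq] at hp
    exact Prod.le_def.mpr (by omega)
  have hshift : shift '' dyadicCell k a b = dyadicCell k (a - c.1) (b - c.2) := by
    ext q
    refine ⟨?_, fun hq => ⟨q + c, ?_, ?_⟩⟩
    · rintro ⟨p, hp, rfl⟩
      simp only [dyadicCell, Set.mem_ofPred_eq, shift] at hp ⊢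
      omega
    · simp only [dyadicCell, Set.mem_ofPred_eq, Prod.fst_add, Prod.snd_add] at hq ⊢
      omega
    · simp [shift]
  rw [← hinj.image_eq_image_iff hσc hcell, hshift, ← h, ← Set.image_const_add_Ico,
    Set.image_image, Set.image_image]

theorem CellCorner.eq_zero_of_top {ω a b : ℕ} (hab : CellCorner ω ω a b) : a = 0 ∧ b = 0 :=
  ⟨Nat.eq_zero_of_dvd_of_lt hab.2.2.1 hab.1, Nat.eq_zero_of_dvd_of_lt hab.2.2.2 hab.2.1⟩

theorem IsRSFCOrdering.exists_image_Ico_eq_dyadicCell_top {ω : ℕ} {σ : ℕ → ℕ × ℕ}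
    (hσ : IsRSFCOrdering ω σ) {a b : ℕ} (hab : CellCorner ω ω a b) :
    ∃ n < 4 ^ (ω - ω), σ '' Set.Ico (n * 4 ^ ω) ((n + 1) * 4 ^ ω) = dyadicCell ω a b := by
  obtain ⟨rfl, rfl⟩ := hab.eq_zero_of_top
  refine ⟨0, by simp, ?_⟩
  have hIco : Set.Ico (0 * 4 ^ ω) ((0 + 1) * 4 ^ ω) = Set.Iio (4 ^ ω) := by ext; simp
  rw [hIco, hσ.bijOn.image_eq]
  ext p
  simp [grid, square, dyadicCell]

theorem IsRSFCOrdering.exists_image_Ico_eq_dyadicCell {ω : ℕ} {σ : ℕ → ℕ × ℕ}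
    (hσ : IsRSFCOrdering ω σ) {k a b : ℕ} (hk : k ≤ ω) (hab : CellCorner ω k a b) :
    ∃ n < 4 ^ (ω - k), σ '' Set.Ico (n * 4 ^ k) ((n + 1) * 4 ^ k) = dyadicCell k a b := by
  induction ω generalizing σ k a b with
  | zero =>
    obtain rfl : k = 0 := by omega
    exact hσ.exists_image_Ico_eq_dyadicCell_top hab
  | succ ω ih =>
    obtain rfl | hk := hk.eq_or_lt
    · exact hσ.exists_image_Ico_eq_dyadicCell_top hab
    replace hk : k ≤ ω := by omega
    obtain ⟨ha, hb, hka, hkb⟩ := hab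
    obtain ⟨j, hj, c, hc₁, hc₂, habc, himg, hrec⟩ :=
      hσ.exists_quadrant (p := (a, b)) (by simp [grid, square, ha, hb])
    simp only [square, Set.mem_ofPred_eq] at habc
    have hkc : 2 ^ k ∣ c.1 ∧ 2 ^ k ∣ c.2 :=
      ⟨(pow_dvd_pow 2 hk).trans hc₁, (pow_dvd_pow 2 hk).trans hc₂⟩
    obtain ⟨n, hn, hblock⟩ := ih hrec hk (a := a - c.1) (b := b - c.2)
      ⟨by omega, by omega, Nat.dvd_sub hka hkc.1, Nat.dvd_sub hkb hkc.2⟩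
    have h4 : 4 ^ ω = 4 ^ (ω - k) * 4 ^ k := by rw [← pow_add, Nat.sub_add_cancel hk]
    have hle : (n + 1) * 4 ^ k ≤ 4 ^ ω := h4 ▸ Nat.mul_le_mul_right _ hn
    refine ⟨j * 4 ^ (ω - k) + n, ?_, ?_⟩
    · rw [Nat.sub_add_comm hk, pow_succ]
      nlinarith
    · have hstart : (j * 4 ^ (ω - k) + n) * 4 ^ k = j * 4 ^ ω + n * 4 ^ k := by rw [h4]; ring
      have hend : (j * 4 ^ (ω - k) + n + 1) * 4 ^ k = j * 4 ^ ω + (n + 1) * 4 ^ k := by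
        rw [h4]; ring
      rw [hstart, hend]
      refine image_Ico_eq_dyadicCell_of_shift ?_ (Prod.le_def.mpr ⟨habc.1, habc.2.2.1⟩) hblock
      calc σ '' Set.Ico (j * 4 ^ ω + n * 4 ^ k) (j * 4 ^ ω + (n + 1) * 4 ^ k)
          ⊆ σ '' Set.Ico (j * 4 ^ ω) ((j + 1) * 4 ^ ω) :=
            Set.image_mono (Set.Ico_subset_Ico (Nat.le_add_right _ _) (by rw [add_one_mul j]; omega))
        _ ⊆ Set.Ici c := himg ▸ fun p hp => Prod.le_def.mpr ⟨hp.1, hp.2.2.1⟩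

noncomputable def curveIndex (ω : ℕ) (σ : ℕ → ℕ × ℕ) : ℕ × ℕ → ℕ :=
  Function.invFunOn σ (Set.Iio (4 ^ ω))

section curveIndex

variable {ω : ℕ} {σ : ℕ → ℕ × ℕ}

theorem curveIndex_apply (hσ : Set.InjOn σ (Set.Iio (4 ^ ω))) {i : ℕ} (hi : i < 4 ^ ω) :
    curveIndex ω σ (σ i) = i :=
  hσ.leftInvOn_invFunOn hi

theorem curveIndex_lt (hσ : Set.SurjOn σ (Set.Iio (4 ^ ω)) (grid ω)) {p : ℕ × ℕ}
    (hp : p ∈ grid ω) : curveIndex ω σ p < 4 ^ ω :=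
  hσ.mapsTo_invFunOn hp

theorem apply_curveIndex (hσ : Set.SurjOn σ (Set.Iio (4 ^ ω)) (grid ω)) {p : ℕ × ℕ}
    (hp : p ∈ grid ω) : σ (curveIndex ω σ p) = p :=
  hσ.rightInvOn_invFunOn hp

theorem CellCorner.mem_grid {k a b : ℕ} (hab : CellCorner ω k a b) : (a, b) ∈ grid ω := by
  simp [grid, square, hab.1, hab.2.1]

theorem mem_dyadicCell_self (k a b : ℕ) : (a, b) ∈ dyadicCell k a b := by
  simp [dyadicCell]

theorem IsRSFCOrdering.mem_dyadicCell_iff (hσ : IsRSFCOrdering ω σ) {k a b : ℕ} (hk : k ≤ ω)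
    (hab : CellCorner ω k a b) {p : ℕ × ℕ} (hp : p ∈ grid ω) :
    p ∈ dyadicCell k a b ↔ curveIndex ω σ p / 4 ^ k = curveIndex ω σ (a, b) / 4 ^ k := by
  obtain ⟨n, hn, hblock⟩ := hσ.exists_image_Ico_eq_dyadicCell hk hab
  have hblock_lt : Set.Ico (n * 4 ^ k) ((n + 1) * 4 ^ k) ⊆ Set.Iio (4 ^ ω) := fun i hi => by
    have : (n + 1) * 4 ^ k ≤ 4 ^ ω := by
      rw [← Nat.sub_add_cancel hk, pow_add]; exact Nat.mul_le_mul_right _ hn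
    exact lt_of_lt_of_le hi.2 this
  have hmem : ∀ q ∈ grid ω, q ∈ dyadicCell k a b ↔ curveIndex ω σ q / 4 ^ k = n := by
    intro q hq
    rw [← hblock, ← apply_curveIndex hσ.bijOn.surjOn hq,
      hσ.bijOn.injOn.mem_image_iff hblock_lt (curveIndex_lt hσ.bijOn.surjOn hq),
      apply_curveIndex hσ.bijOn.surjOn hq, Nat.div_eq_iff (by positivity), Set.mem_Ico, add_one_mul]
    have : 0 < 4 ^ k := by positivity
    omega
  rw [hmem p hp, (hmem _ hab.mem_grid).mp (mem_dyadicCell_self k a b)]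

end curveIndex

theorem four_pow_eq_two_pow (n : ℕ) : 4 ^ n = 2 ^ (2 * n) := by
  rw [pow_mul]; norm_num

theorem take_toBits_eq_take_toBits_iff_div_four_pow {ℓ ω n m : ℕ} (hℓ : ℓ ≤ ω)
    (hn : n < 4 ^ ω) (hm : m < 4 ^ ω) :
    (toBits (2 * ω) n).take (2 * ℓ) = (toBits (2 * ω) m).take (2 * ℓ) ↔
      n / 4 ^ (ω - ℓ) = m / 4 ^ (ω - ℓ) := by
  have hω : 2 * ω = 2 * ℓ + 2 * (ω - ℓ) := by omega
  rw [four_pow_eq_two_pow, hω] at hn hm ⊢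
  exact take_toBits_eq_take_toBits_iff hn hm

theorem eq_of_mem_dyadicCell {k a b a' b' : ℕ} (ha : 2 ^ k ∣ a) (hb : 2 ^ k ∣ b)
    (ha' : 2 ^ k ∣ a') (hb' : 2 ^ k ∣ b') (h : (a', b') ∈ dyadicCell k a b) :
    (a', b') = (a, b) := by
  simp only [dyadicCell, Set.mem_ofPred_eq] at h
  have h₁ := Nat.eq_zero_of_dvd_of_lt (Nat.dvd_sub ha' ha) (by omega)
  have h₂ := Nat.eq_zero_of_dvd_of_lt (Nat.dvd_sub hb' hb) (by omega)
  simp only [Prod.mk.injEq]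
  omega

theorem dyadicCell_mono {k k' : ℕ} (h : k ≤ k') (a b : ℕ) :
    dyadicCell k a b ⊆ dyadicCell k' a b := fun p hp => by
  have := Nat.pow_le_pow_right two_pos h
  simp only [dyadicCell, Set.mem_ofPred_eq] at hp ⊢
  omega

theorem cellCorner_zero_of_mem_grid {ω : ℕ} {p : ℕ × ℕ} (hp : p ∈ grid ω) :
    CellCorner ω 0 p.1 p.2 := by
  simp_all [CellCorner, grid, square]

noncomputable def mapOfOrdering (ω : ℕ) (σ : ℕ → ℕ × ℕ) (ℓ : ℕ) (p : ℕ × ℕ) : List Bool :=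
  (toBits (2 * ω) (curveIndex ω σ p)).take (2 * ℓ)

section mapOfOrdering

variable {ω : ℕ} {σ : ℕ → ℕ × ℕ}

theorem isRSFCMap_mapOfOrdering (hσ : IsRSFCOrdering ω σ) : IsRSFCMap ω (mapOfOrdering ω σ) := by
  have hlt {k a b} (hab : CellCorner ω k a b) := curveIndex_lt hσ.bijOn.surjOn hab.mem_grid
  refine ⟨fun ℓ hℓ a b _ => by simp [mapOfOrdering]; omega, ?_, ?_⟩
  · intro ℓ hℓ a b a' b' hab hab' hne heq
    have hidx := (take_toBits_eq_take_toBits_iff_div_four_pow hℓ (hlt hab) (hlt hab')).mp heq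
    have hmem := (hσ.mem_dyadicCell_iff (Nat.sub_le ω ℓ) hab hab'.mem_grid).mpr hidx.symm
    exact hne (eq_of_mem_dyadicCell hab.2.2.1 hab.2.2.2 hab'.2.2.1 hab'.2.2.2 hmem).symm
  · intro ℓ ℓ' hℓℓ' hℓ' a b a' b' hab hab' hsub
    have hidx := (hσ.mem_dyadicCell_iff (Nat.sub_le ω ℓ) hab hab'.mem_grid).mp
      (hsub (mem_dyadicCell_self _ a' b'))
    unfold mapOfOrdering
    rw [(take_toBits_eq_take_toBits_iff_div_four_pow (hℓℓ'.trans hℓ') (hlt hab)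
      (hlt hab')).mpr hidx.symm]
    exact List.take_prefix_take_left (by omega)

theorem sortsTo_mapOfOrdering (hσ : Set.InjOn σ (Set.Iio (4 ^ ω))) :
    SortsTo ω (mapOfOrdering ω σ) σ := by
  intro i j hij hj
  rw [mapOfOrdering, mapOfOrdering, curveIndex_apply hσ (hij.trans hj), curveIndex_apply hσ hj,
    List.take_of_length_le (by simp), List.take_of_length_le (by simp)]
  rw [four_pow_eq_two_pow] at hj
  exact toBits_strictMonoOn _ (hij.trans hj) hj hij

end mapOfOrdering

section IsRSFCMap

variable {ω : ℕ} {π : ℕ → ℕ × ℕ → List Bool}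

theorem IsRSFCMap.eq_take (hπ : IsRSFCMap ω π) {ℓ a b : ℕ} (hℓ : ℓ ≤ ω)
    (hab : CellCorner ω (ω - ℓ) a b) : π ℓ (a, b) = (π ω (a, b)).take (2 * ℓ) := by
  have hab₀ : CellCorner ω (ω - ω) a b := by
    simpa using cellCorner_zero_of_mem_grid hab.mem_grid
  have hpre := hπ.2.2 ℓ ω hℓ le_rfl a b a b hab hab₀ (dyadicCell_mono (by omega) a b)
  rwa [List.prefix_iff_eq_take, hπ.1 ℓ hℓ a b hab] at hpre

theorem IsRSFCMap.apply_eq_toBits {σ : ℕ → ℕ × ℕ} (hσ : Set.BijOn σ (Set.Iio (4 ^ ω)) (grid ω))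
    (hπ : IsRSFCMap ω π) (hsort : SortsTo ω π σ) {i : ℕ} (hi : i < 4 ^ ω) :
    π ω (σ i) = toBits (2 * ω) i := by
  have h4 := four_pow_eq_two_pow ω
  rw [h4] at hi hσ
  refine eq_toBits_of_strictMonoOn (f := fun i => π ω (σ i)) (fun j hj => ?_)
    (fun j _ j' hj' hjj' => hsort j j' hjj' (h4 ▸ hj')) i hi
  simpa using hπ.1 ω le_rfl _ _ (by simpa using cellCorner_zero_of_mem_grid (hσ.mapsTo hj))

theorem IsRSFCMap.eq_of_sortsTo {σ : ℕ → ℕ × ℕ} (hσ : Set.BijOn σ (Set.Iio (4 ^ ω)) (grid ω))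
    {π' : ℕ → ℕ × ℕ → List Bool} (hπ : IsRSFCMap ω π) (hsort : SortsTo ω π σ)
    (hπ' : IsRSFCMap ω π') (hsort' : SortsTo ω π' σ) {ℓ a b : ℕ} (hℓ : ℓ ≤ ω)
    (hab : CellCorner ω (ω - ℓ) a b) : π ℓ (a, b) = π' ℓ (a, b) := by
  obtain ⟨i, hi, hσi⟩ := hσ.surjOn hab.mem_grid
  rw [hπ.eq_take hℓ hab, hπ'.eq_take hℓ hab, ← hσi, hπ.apply_eq_toBits hσ hsort hi,
    hπ'.apply_eq_toBits hσ hsort' hi]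

end IsRSFCMap

/-- For every recursive space-filling curve ordering `σ` of the grid
`D = {0,…,2^ω−1}²` (Definition 2.1), there exists a recursive space-filling curve
map `π` on `D` (Definition 2.3) such that for all `i < j` (within the index range)
one has `π(σ(i)) < π(σ(j))` in lexicographic order, i.e. sorting `D` by `π` recovers
`σ`.  Moreover this `π` is unique (on the cells of the quadtree). -/
theorem rsfc_ordering_to_map (ω : ℕ) (σ : ℕ → ℕ × ℕ) (hσ : IsRSFCOrdering ω σ) :
    ∃ π : ℕ → ℕ × ℕ → List Bool, IsRSFCMap ω π ∧ SortsTo ω π σ ∧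
      ∀ π' : ℕ → ℕ × ℕ → List Bool, IsRSFCMap ω π' → SortsTo ω π' σ →
        ∀ ℓ, ℓ ≤ ω → ∀ a b, CellCorner ω (ω - ℓ) a b → π' ℓ (a, b) = π ℓ (a, b) :=
  ⟨mapOfOrdering ω σ, isRSFCMap_mapOfOrdering hσ, sortsTo_mapOfOrdering hσ.bijOn.injOn,
    fun _ hπ' hsort' _ hℓ _ _ hab => hπ'.eq_of_sortsTo hσ.bijOn hsort'
      (isRSFCMap_mapOfOrdering hσ) (sortsTo_mapOfOrdering hσ.bijOn.injOn) hℓ hab⟩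
end

section
/- Let d ≥ 1, ω ∈ ℕ, and let Q be an axis-aligned query hypercube contained in the grid {0,…,2^ω−1}^d containing #Q grid points. Define cells(Q) as the set of dyadic cells C of the grid with #Q ≤ #C < 2·#Q that intersect Q, where #C is the number of grid points of C. Then the union of the cells in cells(Q) contains at most 2^{d+1}·#Q grid points; i.e. the region covered by cells(Q) has volume at most 2·2^d times that of Q. -/
/-!
All cells of `cells(Q)` have the same level `k`, because `[#Q, 2·#Q)` contains at most one
power of `2^d`. Since `q ≤ 2^k`, in each coordinate a level-`k` cell meeting `Q` is one of the
two consecutive dyadic intervals starting at the one that contains `a_j`. Hence the union lies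
in a box of side `2^(k+1)`, which has `2^d · 2^(kd) < 2^(d+1)·#Q` points.
-/

/-- The level-`k` dyadic cell of `ℕ^d` with corner `c`:
`Π_j {c_j,…,c_j+2^k−1}`; it contains `2^{kd}` grid points. -/
def cellD (d k : ℕ) (c : Fin d → ℕ) : Set (Fin d → ℕ) :=
  {x | ∀ j, c j ≤ x j ∧ x j < c j + 2 ^ k}

/-- The axis-aligned box `Π_j {a_j,…,a_j+q−1}` of side length `q`;
it contains `q^d` grid points. -/
def boxD (d q : ℕ) (a : Fin d → ℕ) : Set (Fin d → ℕ) :=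
  {x | ∀ j, a j ≤ x j ∧ x j < a j + q}

/-- `cells(Q)` for the query hypercube `Q = Π_j {a_j,…,a_j+q−1}` in the grid
`{0,…,2^ω−1}^d`: the set of dyadic cells `C` of the grid with `#Q ≤ #C < 2·#Q`
(where `#C = 2^{kd}` for a level-`k` cell and `#Q = q^d`) that intersect `Q`. -/
def cellsQ (d ω q : ℕ) (a : Fin d → ℕ) : Set (Set (Fin d → ℕ)) :=
  {C | ∃ k ≤ ω, ∃ c : Fin d → ℕ, (∀ j, c j < 2 ^ ω ∧ 2 ^ k ∣ c j) ∧
      C = cellD d k c ∧ q ^ d ≤ 2 ^ (k * d) ∧ 2 ^ (k * d) < 2 * q ^ d ∧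
      (cellD d k c ∩ boxD d q a).Nonempty}

theorem eq_of_pow_mem_Ico_two_mul {b N k k' : ℕ} (hb : 2 ≤ b)
    (hk : b ^ k ∈ Set.Ico N (2 * N)) (hk' : b ^ k' ∈ Set.Ico N (2 * N)) : k = k' := by
  wlog hle : k ≤ k' generalizing k k'
  · exact (this hk' hk (by omega)).symm
  by_contra hne
  have : 2 * N ≤ b ^ k' :=
    calc 2 * N ≤ b * b ^ k := Nat.mul_le_mul hb hk.1
      _ = b ^ (k + 1) := (pow_succ' b k).symm
      _ ≤ b ^ k' := Nat.pow_le_pow_right (by omega) (by omega)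
  exact absurd hk'.2 this.not_gt

theorem mem_Ico_two_mul_of_dvd {s c a x z : ℕ} (hc : s ∣ c) (hx : c ≤ x ∧ x < c + s)
    (hz : c ≤ z ∧ z < c + s) (haz : a ≤ z) (hza : z < a + s) :
    s * (a / s) ≤ x ∧ x < s * (a / s) + 2 * s := by
  obtain ⟨m, rfl⟩ := hc
  -- the corner `s * m` is `s * (a / s)` or the next multiple of `s`
  have hdiv := Nat.div_add_mod a s
  have hmod := Nat.mod_lt a (show 0 < s by omega)
  have hnm : a / s ≤ m := Nat.lt_succ_iff.mp <|
    Nat.lt_of_mul_lt_mul_left (a := s) (by rw [Nat.mul_succ]; omega)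
  have hmn : m ≤ a / s + 1 := Nat.lt_succ_iff.mp <|
    Nat.lt_of_mul_lt_mul_left (a := s) (by rw [Nat.mul_succ, Nat.mul_succ]; omega)
  have h1 := Nat.mul_le_mul_left s hnm
  have h2 := Nat.mul_le_mul_left s hmn
  rw [Nat.mul_succ] at h2
  omega

theorem boxD_eq_piFinset (d q : ℕ) (a : Fin d → ℕ) :
    boxD d q a = ↑(Fintype.piFinset fun j => Finset.Ico (a j) (a j + q)) := by
  ext x
  simp [boxD]

theorem ncard_boxD (d q : ℕ) (a : Fin d → ℕ) : (boxD d q a).ncard = q ^ d := by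
  rw [boxD_eq_piFinset, Set.ncard_coe_finset, Fintype.card_piFinset]
  simp

theorem finite_boxD (d q : ℕ) (a : Fin d → ℕ) : (boxD d q a).Finite := by
  rw [boxD_eq_piFinset]
  exact Finset.finite_toSet _

theorem sUnion_cellsQ_subset_boxD {d ω q k : ℕ} (hd : 1 ≤ d) (a : Fin d → ℕ)
    (hk : 2 ^ (k * d) ∈ Set.Ico (q ^ d) (2 * q ^ d)) :
    ⋃₀ cellsQ d ω q a ⊆ boxD d (2 * 2 ^ k) fun j => 2 ^ k * (a j / 2 ^ k) := by
  have hpow (k : ℕ) : 2 ^ (k * d) = (2 ^ d) ^ k := by rw [mul_comm, pow_mul]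
  have hqk : q ≤ 2 ^ k :=
    (Nat.pow_le_pow_iff_left (n := d) (by omega)).mp (by rw [← pow_mul]; exact hk.1)
  rintro x ⟨_, ⟨k', -, c, hc, rfl, hk'₁, hk'₂, z, hzc, hza⟩, hxc⟩
  obtain rfl : k = k' := by
    rw [hpow] at hk hk'₁ hk'₂
    exact eq_of_pow_mem_Ico_two_mul (Nat.one_lt_two_pow (by omega)) hk ⟨hk'₁, hk'₂⟩
  exact fun j => mem_Ico_two_mul_of_dvd (hc j).2 (hxc j) (hzc j) (hza j).1
    ((hza j).2.trans_le (Nat.add_le_add_left hqk _))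

theorem cellsQ_volume_general (d ω q : ℕ) (hd : 1 ≤ d) (a : Fin d → ℕ) :
    (⋃₀ cellsQ d ω q a).ncard ≤ 2 ^ (d + 1) * q ^ d := by
  obtain he | ⟨-, k, -, -, -, -, hk₁, hk₂, -⟩ := (cellsQ d ω q a).eq_empty_or_nonempty
  · simp [he]
  calc (⋃₀ cellsQ d ω q a).ncard
      ≤ (boxD d (2 * 2 ^ k) fun j => 2 ^ k * (a j / 2 ^ k)).ncard :=
        Set.ncard_le_ncard (sUnion_cellsQ_subset_boxD hd a ⟨hk₁, hk₂⟩) (finite_boxD ..)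
    _ = 2 ^ d * 2 ^ (k * d) := by rw [ncard_boxD]; ring
    _ ≤ 2 ^ (d + 1) * q ^ d := by rw [pow_succ, mul_assoc]; gcongr

/-- Let `Q` be an axis-aligned query hypercube contained in the grid
`{0,…,2^ω−1}^d` (`d ≥ 1`) containing `#Q = q^d` grid points.  Then the union of the
cells in `cells(Q)` contains at most `2^{d+1}·#Q` grid points, i.e. the region
covered by `cells(Q)` has volume at most `2·2^d` times that of `Q`. -/
theorem cellsQ_volume (d ω q : ℕ) (hd : 1 ≤ d) (a : Fin d → ℕ)
    (hQ : ∀ j, a j + q ≤ 2 ^ ω) :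
    (⋃₀ cellsQ d ω q a).ncard ≤ 2 ^ (d + 1) * q ^ d :=
  cellsQ_volume_general d ω q hd a
end

section
/- The distance-query heuristic of Algorithm 1 is correct: let ω ∈ ℕ, let P be a finite set of points of the grid {0,…,2^ω−1}², let q ∈ ℝ² and δ > 0, let Q be any axis-aligned square of grid points containing all grid points within Euclidean distance δ of q, let k ≤ ω satisfy 2^k ≥ side length of Q, and let C_1,…,C_μ (μ ≤ 4) be the level-k dyadic cells intersecting Q, with corners (a_i,b_i). Then ⋃_{i=1}^{μ} { p ∈ P : morton_ω(a_i,b_i) ≤ morton_ω(p) < morton_ω(a_i,b_i) + 4^k and ‖p − q‖₂ < δ } = { p ∈ P : ‖p − q‖₂ < δ }. -/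
lemma morton_two_pow_mul (k m n : ℕ) : morton k (2 ^ k * m) (2 ^ k * n) = 0 := by
  refine Finset.sum_eq_zero fun i hi => ?_
  have hik : ¬ i ≥ k := by simpa using hi
  simp [Nat.testBit_two_pow_mul, hik]

lemma testBit_two_pow_mul_div_two_pow {k i : ℕ} (x : ℕ) (hi : k ≤ i) :
    Nat.testBit (2 ^ k * (x / 2 ^ k)) i = Nat.testBit x i := by
  simp [Nat.testBit_two_pow_mul, Nat.testBit_div_two_pow, hi, Nat.sub_add_cancel hi]

lemma morton_dyadic_corner_add {ω k : ℕ} (hk : k ≤ ω) (x y : ℕ) :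
    morton ω (2 ^ k * (x / 2 ^ k)) (2 ^ k * (y / 2 ^ k)) + morton k x y = morton ω x y := by
  simp only [morton, ← Finset.sum_range_add_sum_Ico _ hk]
  rw [← morton, ← morton, morton_two_pow_mul, zero_add, add_comm]
  congr 1
  refine Finset.sum_congr rfl fun i hi => ?_
  have hki := (Finset.mem_Ico.mp hi).1
  rw [testBit_two_pow_mul_div_two_pow x hki, testBit_two_pow_mul_div_two_pow y hki]

lemma two_pow_mul_div_two_pow_le_lt_add (k x : ℕ) :
    2 ^ k * (x / 2 ^ k) ≤ x ∧ x < 2 ^ k * (x / 2 ^ k) + 2 ^ k :=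
  ⟨Nat.mul_div_le x _, by simpa [mul_add] using Nat.lt_mul_div_succ x (Nat.two_pow_pos k)⟩

theorem distance_query_correct_general (ω k : ℕ) (hk : k ≤ ω) (P : Finset (ℕ × ℕ))
    (hP : ∀ p ∈ P, p.1 < 2 ^ ω ∧ p.2 < 2 ^ ω)
    (q : ℝ × ℝ) (δ : ℝ)
    (qa qb qs : ℕ)
    (hQ : ∀ p : ℕ × ℕ, p.1 < 2 ^ ω → p.2 < 2 ^ ω →
      Real.sqrt (((p.1 : ℝ) - q.1) ^ 2 + ((p.2 : ℝ) - q.2) ^ 2) ≤ δ →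
      qa ≤ p.1 ∧ p.1 < qa + qs ∧ qb ≤ p.2 ∧ p.2 < qb + qs) :
    (⋃ c ∈ {c : ℕ × ℕ | c.1 < 2 ^ ω ∧ c.2 < 2 ^ ω ∧ 2 ^ k ∣ c.1 ∧ 2 ^ k ∣ c.2 ∧
        ∃ p : ℕ × ℕ, (c.1 ≤ p.1 ∧ p.1 < c.1 + 2 ^ k ∧ c.2 ≤ p.2 ∧ p.2 < c.2 + 2 ^ k) ∧
          (qa ≤ p.1 ∧ p.1 < qa + qs ∧ qb ≤ p.2 ∧ p.2 < qb + qs)},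
      {p : ℕ × ℕ | p ∈ P ∧
        morton ω c.1 c.2 ≤ morton ω p.1 p.2 ∧
        morton ω p.1 p.2 < morton ω c.1 c.2 + 4 ^ k ∧
        Real.sqrt (((p.1 : ℝ) - q.1) ^ 2 + ((p.2 : ℝ) - q.2) ^ 2) < δ}) =
    {p : ℕ × ℕ | p ∈ P ∧
      Real.sqrt (((p.1 : ℝ) - q.1) ^ 2 + ((p.2 : ℝ) - q.2) ^ 2) < δ} := by
  ext p
  simp only [Set.mem_iUnion, Set.mem_ofPred_eq]
  refine ⟨fun ⟨_, _, hp, _, _, hd⟩ => ⟨hp, hd⟩, fun ⟨hp, hd⟩ => ?_⟩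
  obtain ⟨hp1, hp2⟩ := hP p hp
  have hpQ := hQ p hp1 hp2 hd.le
  obtain ⟨ha, ha'⟩ := two_pow_mul_div_two_pow_le_lt_add k p.1
  obtain ⟨hb, hb'⟩ := two_pow_mul_div_two_pow_le_lt_add k p.2
  have hcode := morton_dyadic_corner_add hk p.1 p.2
  have hlow := morton_lt_four_pow k p.1 p.2
  refine ⟨(2 ^ k * (p.1 / 2 ^ k), 2 ^ k * (p.2 / 2 ^ k)),
    ⟨by omega, by omega, ⟨_, rfl⟩, ⟨_, rfl⟩, p, ⟨ha, ha', hb, hb'⟩, hpQ⟩,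
    hp, Nat.le.intro hcode, hcode ▸ Nat.add_lt_add_left hlow _, hd⟩

/-- Correctness of the distance-query heuristic of Algorithm 1: let `P` be a finite
set of points of the grid `{0,…,2^ω−1}²`, `q ∈ ℝ²`, `δ > 0`, and let
`Q = {qa,…,qa+qs−1} × {qb,…,qb+qs−1}` be an axis-aligned square of grid points
containing all grid points within Euclidean distance `δ` of `q`.  Let `k ≤ ω`
satisfy `2^k ≥ qs`.  Then the union, over the corners `c` of the level-`k` dyadic
cells intersecting `Q`, of the sets
`{p ∈ P : morton ω c ≤ morton ω p < morton ω c + 4^k and ‖p − q‖₂ < δ}`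
is exactly `{p ∈ P : ‖p − q‖₂ < δ}`. -/
theorem distance_query_correct (ω k : ℕ) (hk : k ≤ ω) (P : Finset (ℕ × ℕ))
    (hP : ∀ p ∈ P, p.1 < 2 ^ ω ∧ p.2 < 2 ^ ω)
    (q : ℝ × ℝ) (δ : ℝ) (hδ : 0 < δ)
    (qa qb qs : ℕ) (hQa : qa + qs ≤ 2 ^ ω) (hQb : qb + qs ≤ 2 ^ ω)
    (hqs : qs ≤ 2 ^ k)
    (hQ : ∀ p : ℕ × ℕ, p.1 < 2 ^ ω → p.2 < 2 ^ ω →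
      Real.sqrt (((p.1 : ℝ) - q.1) ^ 2 + ((p.2 : ℝ) - q.2) ^ 2) ≤ δ →
      qa ≤ p.1 ∧ p.1 < qa + qs ∧ qb ≤ p.2 ∧ p.2 < qb + qs) :
    (⋃ c ∈ {c : ℕ × ℕ | c.1 < 2 ^ ω ∧ c.2 < 2 ^ ω ∧ 2 ^ k ∣ c.1 ∧ 2 ^ k ∣ c.2 ∧
        ∃ p : ℕ × ℕ, (c.1 ≤ p.1 ∧ p.1 < c.1 + 2 ^ k ∧ c.2 ≤ p.2 ∧ p.2 < c.2 + 2 ^ k) ∧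
          (qa ≤ p.1 ∧ p.1 < qa + qs ∧ qb ≤ p.2 ∧ p.2 < qb + qs)},
      {p : ℕ × ℕ | p ∈ P ∧
        morton ω c.1 c.2 ≤ morton ω p.1 p.2 ∧
        morton ω p.1 p.2 < morton ω c.1 c.2 + 4 ^ k ∧
        Real.sqrt (((p.1 : ℝ) - q.1) ^ 2 + ((p.2 : ℝ) - q.2) ^ 2) < δ}) =
    {p : ℕ × ℕ | p ∈ P ∧
      Real.sqrt (((p.1 : ℝ) - q.1) ^ 2 + ((p.2 : ℝ) - q.2) ^ 2) < δ} :=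
  distance_query_correct_general ω k hk P hP q δ qa qb qs hQ
end

section
/- Let d ≥ 1, ω ∈ ℕ, and let P = (p_1,…,p_n) be n points drawn independently and uniformly at random from the grid D = {0,…,2^ω−1}^d. Let Q be an axis-aligned query hypercube in D containing #Q grid points, and let cells(Q) be the set of dyadic cells C with #Q ≤ #C < 2·#Q that intersect Q. Then the expected number of indices j with p_j ∈ ⋃ cells(Q) is at most 2^{d+1} · n · #Q / #D; i.e. the expected overhead of scanning cells(Q) is at most a factor 2^{d+1} compared to the expected number n·#Q/#D of points in Q itself. -/
open MeasureTheory

/-- The uniform distribution (as a measure) on the grid `D = {0,…,2^ω−1}^d`. -/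
noncomputable def gridUniform (d ω : ℕ) : Measure (Fin d → ℕ) :=
  (PMF.uniformOfFinset (Fintype.piFinset fun _ : Fin d => Finset.range (2 ^ ω))
    (by
      rw [Fintype.piFinset_nonempty]
      intro j
      rw [Finset.nonempty_range_iff]
      positivity)).toMeasure

/-! All cells of `cells(Q)` have the same level `k`, the one with `#Q ≤ 2^{kd} < 2·#Q`; in
particular `q ≤ 2^k`. An aligned interval of length `2^k ≥ q` meeting `[a_j, a_j + q)` lies in
the interval of length `2·2^k` starting at `a_j` rounded down to a multiple of `2^k`, so
`⋃ cells(Q)` lies in a box with `(2·2^k)^d < 2^{d+1}·#Q` points. By linearity of expectation the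
expected count is `n` times the probability of that box. -/

theorem lintegral_ncard_mem_eq {α : Type*} [MeasurableSpace α] (μ : Measure α)
    [IsProbabilityMeasure μ] (n : ℕ) {U : Set α} (hU : MeasurableSet U) :
    ∫⁻ x : Fin n → α, ({j : Fin n | x j ∈ U}.ncard : ENNReal) ∂(Measure.pi fun _ => μ) =
      n * μ U := by
  classical
  have hcount (x : Fin n → α) : ({j : Fin n | x j ∈ U}.ncard : ENNReal) =
      ∑ j, ((fun x : Fin n → α => x j) ⁻¹' U).indicator 1 x := by
    rw [Set.ncard_eq_toFinset_card', Set.toFinset_ofPred, Finset.card_filter]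
    push_cast
    simp [Set.indicator_apply]
  have hmeas (j : Fin n) : MeasurableSet ((fun x : Fin n → α => x j) ⁻¹' U) :=
    hU.preimage (measurable_pi_apply j)
  simp_rw [hcount]
  rw [lintegral_finsetSum _ fun j _ => (measurable_one.indicator (hmeas j))]
  simp_rw [lintegral_indicator_one (hmeas _),
    (measurePreserving_eval (fun _ : Fin n => μ) _).measure_preimage hU.nullMeasurableSet]
  simp

theorem Ico_subset_Ico_of_dvd_of_mem {s c a q y : ℕ} (hc : s ∣ c) (hq : q ≤ s)
    (hyc : y ∈ Set.Ico c (c + s)) (hya : y ∈ Set.Ico a (a + q)) :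
    Set.Ico c (c + s) ⊆ Set.Ico (s * (a / s)) (s * (a / s) + 2 * s) := by
  obtain ⟨m, rfl⟩ := hc
  obtain ⟨hy₁, hy₂⟩ := hyc
  obtain ⟨hya₁, hya₂⟩ := hya
  have hdiv := Nat.div_add_mod a s
  have hmod := Nat.mod_lt a (show 0 < s by omega)
  generalize a / s = t, a % s = r at *
  have htm : t < m + 1 := Nat.lt_of_mul_lt_mul_left (a := s) (by rw [mul_add_one]; linarith)
  have hmt : m < t + 2 := Nat.lt_of_mul_lt_mul_left (a := s) (by rw [mul_add]; linarith)
  rintro x ⟨hx₁, hx₂⟩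
  constructor <;> nlinarith

theorem le_of_pow_le_two_pow_mul_of_two_pow_mul_lt {d q k k' : ℕ} (hd : 1 ≤ d)
    (hk : q ^ d ≤ 2 ^ (k * d)) (hk' : 2 ^ (k' * d) < 2 * q ^ d) : k' ≤ k := by
  by_contra! h
  have hmono : 2 ^ ((k + 1) * d) ≤ 2 ^ (k' * d) :=
    Nat.pow_le_pow_right two_pos (by gcongr; omega)
  have hdouble : 2 * 2 ^ (k * d) ≤ 2 ^ ((k + 1) * d) := by
    rw [add_one_mul, pow_add, mul_comm]
    gcongr
    exact Nat.le_self_pow (by omega) 2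
  omega

theorem cellD_subset_boxD {d k q : ℕ} {c a : Fin d → ℕ} (hc : ∀ j, 2 ^ k ∣ c j)
    (hq : q ≤ 2 ^ k) (hmeet : (cellD d k c ∩ boxD d q a).Nonempty) :
    cellD d k c ⊆ boxD d (2 * 2 ^ k) fun j => 2 ^ k * (a j / 2 ^ k) := by
  obtain ⟨y, hyc, hya⟩ := hmeet
  intro x hx j
  exact Ico_subset_Ico_of_dvd_of_mem (hc j) hq (hyc j) (hya j) (hx j)

theorem gridUniform_boxD_le (d ω s : ℕ) (b : Fin d → ℕ) :
    gridUniform d ω (boxD d s b) ≤ (s : ENNReal) ^ d / 2 ^ (ω * d) := by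
  classical
  rw [gridUniform, PMF.toMeasure_uniformOfFinset_apply _ _ (Set.to_countable _).measurableSet,
    Fintype.card_piFinset]
  have hsub : {x ∈ Fintype.piFinset fun _ : Fin d => Finset.range (2 ^ ω) | x ∈ boxD d s b} ⊆
      Fintype.piFinset fun j => Finset.Ico (b j) (b j + s) := fun x hx =>
    Fintype.mem_piFinset.mpr fun j => Finset.mem_Ico.mpr ((Finset.mem_filter.mp hx).2 j)
  have hcard := Finset.card_le_card hsub
  simp only [Fintype.card_piFinset, Nat.card_Ico, add_tsub_cancel_left, Finset.prod_const,
    Finset.card_univ, Fintype.card_fin] at hcard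
  simp only [Finset.card_range, Finset.prod_const, Finset.card_univ, Fintype.card_fin]
  push_cast
  rw [← pow_mul]
  gcongr
  exact_mod_cast hcard

theorem exists_boxD_superset_sUnion_cellsQ {d : ℕ} (ω q : ℕ) (a : Fin d → ℕ)
    (hd : 1 ≤ d) :
    ∃ s b, s ^ d ≤ 2 ^ (d + 1) * q ^ d ∧ ⋃₀ cellsQ d ω q a ⊆ boxD d s b := by
  rcases (cellsQ d ω q a).eq_empty_or_nonempty with hempty | ⟨-, k, -, -, -, -, hqk, hkq, -⟩
  · exact ⟨0, a, by simp [zero_pow (by omega : d ≠ 0)], by simp [hempty]⟩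
  refine ⟨2 * 2 ^ k, fun j => 2 ^ k * (a j / 2 ^ k), ?_, ?_⟩
  · calc (2 * 2 ^ k) ^ d = 2 ^ d * 2 ^ (k * d) := by rw [mul_pow, pow_mul]
      _ ≤ 2 ^ d * (2 * q ^ d) := by gcongr
      _ = 2 ^ (d + 1) * q ^ d := by ring
  rintro x ⟨-, ⟨k', -, c, hc, rfl, hqk', hk'q, hmeet⟩, hx⟩
  obtain rfl : k = k' := le_antisymm (le_of_pow_le_two_pow_mul_of_two_pow_mul_lt hd hqk' hkq)
    (le_of_pow_le_two_pow_mul_of_two_pow_mul_lt hd hqk hk'q)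
  have hq : q ≤ 2 ^ k := by
    rw [pow_mul] at hqk
    exact (Nat.pow_le_pow_iff_left (by omega)).mp hqk
  exact cellD_subset_boxD (fun j => (hc j).2) hq hmeet hx

theorem expected_scan_overhead_general (d ω n : ℕ) (hd : 1 ≤ d) (q : ℕ) (a : Fin d → ℕ) :
    ∫⁻ x : Fin n → Fin d → ℕ,
        ({j : Fin n | x j ∈ ⋃₀ cellsQ d ω q a}.ncard : ENNReal)
      ∂(Measure.pi fun _ : Fin n => gridUniform d ω) ≤
    2 ^ (d + 1) * n * q ^ d / 2 ^ (ω * d) := by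
  have : IsProbabilityMeasure (gridUniform d ω) := by rw [gridUniform]; infer_instance
  obtain ⟨s, b, hs, hsub⟩ := exists_boxD_superset_sUnion_cellsQ ω q a hd
  calc _ = n * gridUniform d ω (⋃₀ cellsQ d ω q a) :=
        lintegral_ncard_mem_eq _ n (Set.to_countable _).measurableSet
    _ ≤ n * gridUniform d ω (boxD d s b) := by gcongr
    _ ≤ n * ((s : ENNReal) ^ d / 2 ^ (ω * d)) := by gcongr; exact gridUniform_boxD_le d ω s b
    _ ≤ 2 ^ (d + 1) * n * q ^ d / 2 ^ (ω * d) := by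
      rw [← mul_div_assoc]
      gcongr ?_ / _
      rw [mul_comm _ (n : ENNReal), mul_assoc]
      exact_mod_cast Nat.mul_le_mul_left n hs

/-- Let `p_1,…,p_n` be drawn independently and uniformly at random from the grid
`D = {0,…,2^ω−1}^d` (`d ≥ 1`), and let `Q` be an axis-aligned query hypercube in `D`
with `#Q = q^d` grid points.  Then the expected number of indices `j` with
`p_j ∈ ⋃ cells(Q)` is at most `2^{d+1}·n·#Q/#D` where `#D = 2^{ωd}`: the expected
overhead of scanning `cells(Q)` is at most a factor `2^{d+1}` compared to the
expected number `n·#Q/#D` of points in `Q` itself. -/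
theorem expected_scan_overhead (d ω n : ℕ) (hd : 1 ≤ d) (q : ℕ) (a : Fin d → ℕ)
    (hQ : ∀ j, a j + q ≤ 2 ^ ω) :
    ∫⁻ x : Fin n → Fin d → ℕ,
        ({j : Fin n | x j ∈ ⋃₀ cellsQ d ω q a}.ncard : ENNReal)
      ∂(Measure.pi fun _ : Fin n => gridUniform d ω) ≤
    2 ^ (d + 1) * n * q ^ d / 2 ^ (ω * d) :=
  expected_scan_overhead_general d ω n hd q a
end
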